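/- arXiv:1809.00280 — 2 statements merged into one kernel-verified Lean document; each statement's English description precedes it below -/
import Mathlib

section
/- Suppose a reduced computation W_0 → … → W_t of the S-machine M2 starts with an admissible word W_0 having no letters from the alphabets X_{i,ℓ} (respectively, no letters from the alphabets X_{i,r}). Assume the length of its base B is bounded above by a constant N_0 and that B contains a history subword Q_{i,ℓ} Q_{i,r}. Then there is a constant c = c(N_0) such that |W_0|_Y ≤ c |W_t|_Y. -/
namespace SM

/-- The hardware of an `S`-machine: a set `Q` of state letters, each belonging to a part
(the parts of the standard base are indexed by integer positions, `part q` being the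
position of the part containing `q`), and a set `A` of tape letters, each belonging to
the alphabet of one sector (`sec y = i` means that `y` is a tape letter of the sector
lying between the parts in positions `i` and `i + 1`). -/
structure Hardware where
  Q : Type
  A : Type
  part : Q → ℤ
  sec : A → ℤ

/-- An admissible word with `k + 1` state letters: `st i` is the `i`-th (signed) state
letter and `w i` is the (reduced) tape word between the `i`-th and `(i+1)`-st state
letters. -/
structure Conf (h : Hardware) (k : ℕ) where
  st : Fin (k + 1) → h.Q × Bool
  w : Fin k → FreeGroup h.A

/-- A rule of an `S`-machine: the part in position `p` has the component
`src p → (a p) (tgt p) (b p)`, and `allow` is the set `Y(θ)` of tape letters allowed in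
the admissible words of its domain. -/
structure Rule (h : Hardware) where
  src : ℤ → h.Q
  tgt : ℤ → h.Q
  a : ℤ → FreeGroup h.A
  b : ℤ → FreeGroup h.A
  allow : h.A → Prop

/-- the index of the sector lying immediately to the right of a signed state letter -/
def rightSec (h : Hardware) (x : h.Q × Bool) : ℤ :=
  if x.2 then h.part x.1 else h.part x.1 - 1

/-- the condition on two consecutive (signed) state letters of an admissible word -/
def adj (h : Hardware) (x x' : h.Q × Bool) : Prop :=
  (x'.2 = x.2 ∧
    h.part x'.1 = (if x.2 then h.part x.1 + 1 else h.part x.1 - 1)) ∨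
  x' = (x.1, !x.2)

/-- `W` is an admissible word: consecutive state letters obey the adjacency conditions,
every tape letter lies in the alphabet of its sector, and the word is reduced. -/
def Admissible (h : Hardware) [DecidableEq h.A] {k : ℕ} (W : Conf h k) : Prop :=
  (∀ i : Fin k, adj h (W.st i.castSucc) (W.st i.succ)) ∧
  (∀ i : Fin k, ∀ l ∈ (W.w i).toWord, h.sec l.1 = rightSec h (W.st i.castSucc)) ∧
  (∀ i : Fin k, W.st i.succ = ((W.st i.castSucc).1, !(W.st i.castSucc).2) →
    W.w i ≠ 1)

variable {h : Hardware}

/-- the word contributed by a rule immediately to the right of a signed state letter -/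
def Rmul (θ : Rule h) (x : h.Q × Bool) : FreeGroup h.A :=
  if x.2 then θ.b (h.part x.1) else (θ.a (h.part x.1))⁻¹

/-- the word contributed by a rule immediately to the left of a signed state letter -/
def Lmul (θ : Rule h) (x : h.Q × Bool) : FreeGroup h.A :=
  if x.2 then θ.a (h.part x.1) else (θ.b (h.part x.1))⁻¹

/-- One application of a rule `θ` to an admissible word `W`, producing `W'`: all state
letters of `W` are source letters of `θ`, all tape letters of `W` are allowed by `θ`,
each state letter is replaced as prescribed by `θ`, and the tape words are multiplied by
the corresponding words (with free reduction, which is automatic in the free group, and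
trimming of the first and last tape letters, which is built into the sector
representation). -/
def Apply [DecidableEq h.A] (θ : Rule h) {k : ℕ} (W W' : Conf h k) : Prop :=
  (∀ i, (W.st i).1 = θ.src (h.part (W.st i).1)) ∧
  (∀ i, W'.st i = (θ.tgt (h.part (W.st i).1), (W.st i).2)) ∧
  (∀ i : Fin k, ∀ l ∈ (W.w i).toWord, θ.allow l.1) ∧
  (∀ i : Fin k, W'.w i = Rmul θ (W.st i.castSucc) * W.w i * Lmul θ (W.st i.succ))

/-- the `Y`-length `|W|_Y` of an admissible word: the number of its tape letters -/
def lenY [DecidableEq h.A] {k : ℕ} (W : Conf h k) : ℕ :=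
  ∑ i : Fin k, (W.w i).toWord.length

end SM

namespace M2

/-- tape letters of `M₂`: `Sum.inl y` is a letter of one of the working alphabets `Y_i`
of `M₁`, and `Sum.inr (i, θ, s)` is the copy of the positive rule `θ` of `M₁` in the
history alphabet `X_{i,ℓ}` (if `s = false`) or `X_{i,r}` (if `s = true`). -/
abbrev A2 (Y Θ : Type) := Y ⊕ (ℤ × Θ × Bool)

/-- The hardware of the `S`-machine `M₂` built from an `S`-machine `M₁` with standard
base `Q_0 Q_1 … Q_n`, state letters `Q` (`partQ q` is the index of the part of `q`),
tape letters `Y` (`secY y = i` means `y ∈ Y_{i+1}`, the alphabet of the sector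
`Q_i Q_{i+1}`), and positive rules `Θ`.  The state letter `(q, true)` is the copy of `q`
in `Q_{i,r}` (position `2i`) and `(q, false)` is its copy in `Q_{i,ℓ}` (position
`2i − 1`); the history sector `Q_{i,ℓ} Q_{i,r}` (positions `2i − 1`, `2i`) has alphabet
`X_i = X_{i,ℓ} ⊔ X_{i,r}`, `1 ≤ i ≤ n − 1`, and the working sector
`Q_{i,r} Q_{i+1,ℓ}` has alphabet `Y_{i+1}`. -/
@[reducible] def hw (Q Y Θ : Type) (partQ : Q → ℤ) (secY : Y → ℤ) (n : ℕ) : SM.Hardware where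
  Q := Q × Bool
  A := A2 Y Θ
  part := fun x => if x.2 then 2 * partQ x.1 else 2 * partQ x.1 - 1
  sec := fun l =>
    match l with
    | Sum.inl y => 2 * secY y
    | Sum.inr z => if 1 ≤ z.1 ∧ z.1 ≤ (n : ℤ) - 1 then 2 * z.1 - 1 else -3

variable {Q Y Θ : Type}

/-- the state letters of a rule of `M₂` obtained from the assignment `q : ℤ → Q` of
state letters of a rule of `M₁` -/
def q2 (q : Θ → ℤ → Q) (θ : Θ) : ℤ → Q × Bool := fun p =>
  if p % 2 = 0 then (q θ (p / 2), true) else (q θ ((p + 1) / 2), false)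

/-- the left words of the positive rule `θ_h` of `M₂`: the part of `θ_h` at `Q_{i,r}` is
`q_{i,r} → h̄_{θ,i} q'_{i,r} b_i` and the part at `Q_{i,ℓ}` is
`q_{i,ℓ} → a_i q'_{i,ℓ} h_{θ,i}⁻¹` -/
def posA (wa : Θ → ℤ → FreeGroup Y) (n : ℕ) (θ : Θ) : ℤ → FreeGroup (A2 Y Θ) :=
  fun p =>
    if p % 2 = 0 then
      (if 1 ≤ p / 2 ∧ p / 2 ≤ (n : ℤ) - 1 then
        FreeGroup.of (Sum.inr (p / 2, θ, true)) else 1)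
    else FreeGroup.map Sum.inl (wa θ ((p + 1) / 2))

/-- the right words of the positive rule `θ_h` of `M₂` -/
def posB (wb : Θ → ℤ → FreeGroup Y) (n : ℕ) (θ : Θ) : ℤ → FreeGroup (A2 Y Θ) :=
  fun p =>
    if p % 2 = 0 then FreeGroup.map Sum.inl (wb θ (p / 2))
    else
      (if 1 ≤ (p + 1) / 2 ∧ (p + 1) / 2 ≤ (n : ℤ) - 1 then
        (FreeGroup.of (Sum.inr ((p + 1) / 2, θ, false)))⁻¹ else 1)

/-- The rules of `M₂`: for every positive rule `θ` of `M₁` (with components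
`q_i → (wa θ i) q_i' (wb θ i)`, source letters `src θ i` and target letters `tgt θ i`),
`M₂` has the rule `θ_h = (θ, true)` and its inverse `(θ, false)`; `Y_j(θ_h) = Y_j` for
every `j` (no tape letters are forbidden). -/
def rule2 (partQ : Q → ℤ) (secY : Y → ℤ) (n : ℕ) (src tgt : Θ → ℤ → Q)
    (wa wb : Θ → ℤ → FreeGroup Y) :
    Θ × Bool → SM.Rule (hw Q Y Θ partQ secY n) := fun r =>
  if r.2 then
    { src := q2 src r.1, tgt := q2 tgt r.1,
      a := posA wa n r.1, b := posB wb n r.1, allow := fun _ => True }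
  else
    { src := q2 tgt r.1, tgt := q2 src r.1,
      a := fun p => (posA wa n r.1 p)⁻¹, b := fun p => (posB wb n r.1 p)⁻¹,
      allow := fun _ => True }

end M2

/-!
Under property (**) every rule of `M₂` changes each of the `k` tape words by at most two
letters, so `|W₀|_Y ≤ |W_t|_Y + 2kt`. In the history sector `Q_{i,ℓ} Q_{i,r}` the rule
`θ_h^{±1}` multiplies the tape word by `h_{θ,i}^{∓1}` on the left and by `h̄_{θ,i}^{±1}` on the
right. If `W₀` has no letters of `X_{i,ℓ}`, the projection of the history-sector word of `W_t`
onto `X_{i,ℓ}` is the history of the computation read backwards, which is reduced, so it has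
length `t`; symmetrically for `X_{i,r}`. Hence `t ≤ |W_t|_Y`, and `|W₀|_Y ≤ (2N₀ + 1)|W_t|_Y`.
-/

namespace FreeGroup

variable {α β : Type*} [DecidableEq α]

theorem norm_list_prod_le (L : List (FreeGroup α)) : norm L.prod ≤ (L.map norm).sum := by
  induction L with
  | nil => simp [norm_one]
  | cons x L ih => simpa using (norm_mul_le x L.prod).trans (Nat.add_le_add_left ih _)

theorem norm_lift_le [DecidableEq β] {f : α → FreeGroup β} (hf : ∀ a, norm (f a) ≤ 1)
    (x : FreeGroup α) : norm (lift f x) ≤ norm x := by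
  conv_lhs => rw [← mk_toWord (x := x), lift_mk]
  refine (norm_list_prod_le _).trans ?_
  have hle : ∀ m ∈ (x.toWord.map fun a => cond a.2 (f a.1) (f a.1)⁻¹).map norm, m ≤ 1 := by
    simp only [List.map_map, List.mem_map, Function.comp_apply, forall_exists_index, and_imp,
      forall_apply_eq_imp_iff₂]
    rintro ⟨a, _ | _⟩ _ <;> simp [norm_inv_eq, hf]
  simpa [norm] using List.sum_le_card_nsmul _ 1 hle

theorem norm_map_le [DecidableEq β] (f : α → β) (x : FreeGroup α) : norm (map f x) ≤ norm x := by
  rw [map_eq_lift]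
  exact norm_lift_le (fun a => (norm_of (f a)).le) x

theorem lift_eq_one_of_forall_mem_toWord {f : α → FreeGroup β} {x : FreeGroup α}
    (h : ∀ l ∈ x.toWord, f l.1 = 1) : lift f x = 1 := by
  rw [← mk_toWord (x := x), lift_mk]
  refine List.prod_eq_one fun y hy => ?_
  obtain ⟨l, hl, rfl⟩ := List.mem_map.mp hy
  cases l.2 <;> simp [h l hl]

theorem toWord_mk_singleton_mul {x : α × Bool} {y : FreeGroup α}
    (h : ∀ b ∈ y.toWord.head?, x.1 = b.1 → x.2 = b.2) :
    (mk [x] * y).toWord = x :: y.toWord := by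
  rw [toWord_mul, toWord_mk, reduce_singleton, List.singleton_append]
  apply IsReduced.reduce_eq
  rcases hy : y.toWord with _ | ⟨b, L⟩
  · exact IsReduced.singleton
  · rw [isReduced_cons_cons]
    exact ⟨h b (by simp [hy]), hy ▸ isReduced_toWord⟩

theorem norm_eq_of_mul_inv_letters {t : ℕ} (g : Fin t → α × Bool)
    (hg : ∀ (i : ℕ) (hi : i + 1 < t),
      g ⟨i + 1, hi⟩ ≠ ((g ⟨i, Nat.lt_of_succ_lt hi⟩).1, !(g ⟨i, Nat.lt_of_succ_lt hi⟩).2))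
    (u : Fin (t + 1) → FreeGroup α) (hu0 : u 0 = 1)
    (hu : ∀ i : Fin t, u i.succ = (mk [g i])⁻¹ * u i.castSucc) :
    norm (u (Fin.last t)) = t := by
  have key : ∀ i : Fin (t + 1), (u i).toWord.length = i ∧
      ∀ m : Fin t, m.succ = i → (u i).toWord.head? = some ((g m).1, !(g m).2) := by
    refine Fin.induction ⟨by simp [hu0], fun m hm => absurd hm (Fin.succ_ne_zero m)⟩ ?_
    rintro i ⟨hlen, hhead⟩
    have hinv : (mk [g i])⁻¹ = mk [((g i).1, !(g i).2)] := by simp [inv_mk, invRev]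
    have hword : (u i.succ).toWord = ((g i).1, !(g i).2) :: (u i.castSucc).toWord := by
      rw [hu, hinv]
      refine toWord_mk_singleton_mul fun b hb h1 => ?_
      rcases Nat.eq_zero_or_pos i with hi | hi
      · rw [List.eq_nil_of_length_eq_zero (l := (u i.castSucc).toWord) (by simp [hlen, hi])] at hb
        simp at hb
      obtain ⟨m, hm⟩ : ∃ m : Fin t, (m : ℕ) + 1 = i := ⟨⟨i - 1, by omega⟩, by simp; omega⟩
      rw [hhead m (Fin.ext (by simp [hm])), Option.mem_some_iff] at hb
      subst hb
      by_contra hne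
      have h2 : (g i).2 = !(g m).2 := (Bool.eq_or_eq_not _ _).resolve_left (by simpa using hne)
      refine hg m (by omega) ?_
      rw [show (⟨m + 1, _⟩ : Fin t) = i from Fin.ext hm]
      exact Prod.ext h1 h2
    refine ⟨by simp [hword, hlen], fun m hm => ?_⟩
    rw [hword, Fin.succ_inj.mp hm]
    rfl
  exact (key (Fin.last t)).1

end FreeGroup

namespace SM

variable {h : Hardware} [DecidableEq h.A]

theorem norm_Rmul_le {θ : Rule h} (ha : ∀ p, (θ.a p).norm ≤ 1) (hb : ∀ p, (θ.b p).norm ≤ 1)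
    (x : h.Q × Bool) : (Rmul θ x).norm ≤ 1 := by
  unfold Rmul
  split <;> simp [FreeGroup.norm_inv_eq, ha, hb]

theorem norm_Lmul_le {θ : Rule h} (ha : ∀ p, (θ.a p).norm ≤ 1) (hb : ∀ p, (θ.b p).norm ≤ 1)
    (x : h.Q × Bool) : (Lmul θ x).norm ≤ 1 := by
  unfold Lmul
  split <;> simp [FreeGroup.norm_inv_eq, ha, hb]

theorem norm_le_lenY {k : ℕ} (W : Conf h k) (j : Fin k) : (W.w j).norm ≤ lenY W :=
  Finset.single_le_sum (f := fun i => (W.w i).norm) (fun _ _ => Nat.zero_le _)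
    (Finset.mem_univ j)

theorem lenY_le_lenY_add_of_apply {θ : Rule h} (ha : ∀ p, (θ.a p).norm ≤ 1)
    (hb : ∀ p, (θ.b p).norm ≤ 1) {k : ℕ} {V V' : Conf h k} (happ : Apply θ V V') :
    lenY V ≤ lenY V' + 2 * k := by
  have hsector : ∀ i, (V.w i).norm ≤ (V'.w i).norm + 2 := by
    intro i
    have hV : V.w i = (Rmul θ (V.st i.castSucc))⁻¹ * V'.w i * (Lmul θ (V.st i.succ))⁻¹ := by
      rw [happ.2.2.2 i]; group
    calc (V.w i).norm
        ≤ (Rmul θ (V.st i.castSucc))⁻¹.norm + (V'.w i).norm + (Lmul θ (V.st i.succ))⁻¹.norm := by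
          rw [hV]
          exact (FreeGroup.norm_mul_le _ _).trans
            (Nat.add_le_add_right (FreeGroup.norm_mul_le _ _) _)
      _ ≤ 1 + (V'.w i).norm + 1 := by
          rw [FreeGroup.norm_inv_eq, FreeGroup.norm_inv_eq]
          gcongr
          exacts [norm_Rmul_le ha hb _, norm_Lmul_le ha hb _]
      _ = (V'.w i).norm + 2 := by ring
  calc lenY V ≤ ∑ i : Fin k, ((V'.w i).norm + 2) := Finset.sum_le_sum fun i _ => hsector i
    _ = lenY V' + 2 * k := by simp [Finset.sum_add_distrib, lenY, FreeGroup.norm, mul_comm]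

theorem lenY_le_lenY_add_of_computation {k t : ℕ} (W : Fin (t + 1) → Conf h k)
    (rules : Fin t → Rule h) (happ : ∀ i, Apply (rules i) (W i.castSucc) (W i.succ))
    (ha : ∀ i p, ((rules i).a p).norm ≤ 1) (hb : ∀ i p, ((rules i).b p).norm ≤ 1) :
    lenY (W 0) ≤ lenY (W (Fin.last t)) + 2 * k * t := by
  have key : ∀ i : Fin (t + 1), lenY (W 0) ≤ lenY (W i) + 2 * k * i := by
    refine Fin.induction (by simp) fun i ih => ?_
    have := lenY_le_lenY_add_of_apply (ha i) (hb i) (happ i)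
    simp only [Fin.val_succ, Fin.val_castSucc] at ih ⊢
    nlinarith
  simpa using key (Fin.last t)

end SM

namespace M2

variable {Q Y Θ : Type} {n : ℕ} {partQ : Q → ℤ} {secY : Y → ℤ} {src tgt : Θ → ℤ → Q}
  {wa wb : Θ → ℤ → FreeGroup Y}

theorem norm_le_one_of_length_add_length_le_one [DecidableEq Y] {a b : ℤ → FreeGroup Y}
    (h : ∃ p0 : ℤ, (∀ p, p ≠ p0 → a p = 1 ∧ b p = 1) ∧
      (a p0).toWord.length + (b p0).toWord.length ≤ 1) (p : ℤ) :
    (a p).norm ≤ 1 ∧ (b p).norm ≤ 1 := by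
  obtain ⟨p0, hp, hlen⟩ := h
  rcases eq_or_ne p p0 with rfl | hne
  · exact ⟨by unfold FreeGroup.norm; omega, by unfold FreeGroup.norm; omega⟩
  · simp [(hp p hne).1, (hp p hne).2, FreeGroup.norm_one]

theorem q2_two_mul_sub_one (q : Θ → ℤ → Q) (θ : Θ) (i : ℤ) :
    q2 q θ (2 * i - 1) = (q θ i, false) := by
  unfold q2
  rw [if_neg (by omega), show (2 * i - 1 + 1) / 2 = i by omega]

theorem q2_two_mul (q : Θ → ℤ → Q) (θ : Θ) (i : ℤ) : q2 q θ (2 * i) = (q θ i, true) := by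
  unfold q2
  rw [if_pos (by omega), show 2 * i / 2 = i by omega]

theorem posA_two_mul {i : ℤ} (hi1 : 1 ≤ i) (hi2 : i ≤ (n : ℤ) - 1) (θ : Θ) :
    posA wa n θ (2 * i) = FreeGroup.of (Sum.inr (i, θ, true)) := by
  unfold posA
  rw [if_pos (by omega), show 2 * i / 2 = i by omega, if_pos ⟨hi1, hi2⟩]

theorem posB_two_mul_sub_one {i : ℤ} (hi1 : 1 ≤ i) (hi2 : i ≤ (n : ℤ) - 1) (θ : Θ) :
    posB wb n θ (2 * i - 1) = (FreeGroup.of (Sum.inr (i, θ, false)))⁻¹ := by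
  unfold posB
  rw [if_neg (by omega), show (2 * i - 1 + 1) / 2 = i by omega, if_pos ⟨hi1, hi2⟩]

/-- `x y` is the positive history subword `Q_{i,ℓ} Q_{i,r}` of a base of `M₂`. -/
def IsHistoryPair (partQ : Q → ℤ) (i : ℤ) (x y : (Q × Bool) × Bool) : Prop :=
  ∃ qa qb, partQ qa = i ∧ partQ qb = i ∧ x = ((qa, false), true) ∧ y = ((qb, true), true)

/-- Induces the projection onto the letters of `X_{i,ℓ}` (`side = false`) or of `X_{i,r}`
(`side = true`), for all `i` at once. -/
def histProj (side : Bool) : A2 Y Θ → FreeGroup Θ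
  | Sum.inl _ => 1
  | Sum.inr (_, θ, s) => if s = side then FreeGroup.of θ else 1

theorem norm_histProj_le [DecidableEq Θ] (side : Bool) (a : A2 Y Θ) :
    (histProj side a).norm ≤ 1 := by
  rcases a with _ | ⟨_, _, s⟩
  · simp [histProj, FreeGroup.norm_one]
  · by_cases hs : s = side <;> simp [histProj, hs, FreeGroup.norm_of, FreeGroup.norm_one]

theorem lift_histProj_mk_singleton (side : Bool) (i : ℤ) (θ : Θ) (s e : Bool) :
    FreeGroup.lift (histProj side) (FreeGroup.mk [((Sum.inr (i, θ, s) : A2 Y Θ), e)]) =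
      if s = side then FreeGroup.mk [(θ, e)] else 1 := by
  rw [FreeGroup.lift_mk]
  cases e <;> split_ifs <;> simp [histProj, *] <;> rfl

variable [DecidableEq Y] [DecidableEq Θ]

theorem norm_posA_le (hwa : ∀ θ p, (wa θ p).norm ≤ 1) (θ : Θ) (p : ℤ) :
    (posA wa n θ p).norm ≤ 1 := by
  unfold posA
  split
  · split <;> simp [FreeGroup.norm_of, FreeGroup.norm_one]
  · exact (FreeGroup.norm_map_le _ _).trans (hwa _ _)

theorem norm_posB_le (hwb : ∀ θ p, (wb θ p).norm ≤ 1) (θ : Θ) (p : ℤ) :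
    (posB wb n θ p).norm ≤ 1 := by
  unfold posB
  split
  · exact (FreeGroup.norm_map_le _ _).trans (hwb _ _)
  · split <;> simp [FreeGroup.norm_inv_eq, FreeGroup.norm_of, FreeGroup.norm_one]

theorem norm_rule2_a_le (hwa : ∀ θ p, (wa θ p).norm ≤ 1) (r : Θ × Bool) (p : ℤ) :
    ((rule2 partQ secY n src tgt wa wb r).a p).norm ≤ 1 := by
  unfold rule2
  split <;> simp [FreeGroup.norm_inv_eq, norm_posA_le hwa]

theorem norm_rule2_b_le (hwb : ∀ θ p, (wb θ p).norm ≤ 1) (r : Θ × Bool) (p : ℤ) :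
    ((rule2 partQ secY n src tgt wa wb r).b p).norm ≤ 1 := by
  unfold rule2
  split <;> simp [FreeGroup.norm_inv_eq, norm_posB_le hwb]

theorem isHistoryPair_and_eq_of_apply_rule2
    (hsrc : ∀ θ p, 0 ≤ p → p ≤ (n : ℤ) → partQ (src θ p) = p)
    (htgt : ∀ θ p, 0 ≤ p → p ≤ (n : ℤ) → partQ (tgt θ p) = p)
    {i : ℤ} (hi1 : 1 ≤ i) (hi2 : i ≤ (n : ℤ) - 1) {r : Θ × Bool} {k : ℕ}
    {V V' : SM.Conf (hw Q Y Θ partQ secY n) k} {j : Fin k}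
    (happ : SM.Apply (rule2 partQ secY n src tgt wa wb r) V V')
    (hpair : IsHistoryPair partQ i (V.st j.castSucc) (V.st j.succ)) :
    IsHistoryPair partQ i (V'.st j.castSucc) (V'.st j.succ) ∧
      V'.w j = (FreeGroup.mk [(Sum.inr (i, r.1, false), r.2)])⁻¹ * V.w j *
        FreeGroup.mk [(Sum.inr (i, r.1, true), r.2)] := by
  obtain ⟨qa, qb, hqa, hqb, hx, hy⟩ := hpair
  obtain ⟨-, hst, -, hword⟩ := happ
  have hsta := hst j.castSucc
  have hstb := hst j.succ
  have hwj := hword j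
  simp only [hx, hy, hqa, hqb, Bool.false_eq_true, if_false, if_true, SM.Rmul, SM.Lmul]
    at hsta hstb hwj
  obtain ⟨θ, _ | _⟩ := r
  · refine ⟨⟨src θ i, src θ i, hsrc θ i (by omega) (by omega), hsrc θ i (by omega) (by omega),
      ?_, ?_⟩, ?_⟩
    · simp [hsta, rule2, q2_two_mul_sub_one]
    · simp [hstb, rule2, q2_two_mul]
    · simp only [hwj, rule2, Bool.false_eq_true, ↓reduceIte, posB_two_mul_sub_one hi1 hi2,
        inv_inv, posA_two_mul hi1 hi2, FreeGroup.inv_mk]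
      rfl
  · refine ⟨⟨tgt θ i, tgt θ i, htgt θ i (by omega) (by omega), htgt θ i (by omega) (by omega),
      ?_, ?_⟩, ?_⟩
    · simp [hsta, rule2, q2_two_mul_sub_one]
    · simp [hstb, rule2, q2_two_mul]
    · simp only [hwj, rule2, ↓reduceIte, posB_two_mul_sub_one hi1 hi2, posA_two_mul hi1 hi2,
        FreeGroup.inv_mk]
      rfl

theorem history_sector_eq_of_computation
    (hsrc : ∀ θ p, 0 ≤ p → p ≤ (n : ℤ) → partQ (src θ p) = p)
    (htgt : ∀ θ p, 0 ≤ p → p ≤ (n : ℤ) → partQ (tgt θ p) = p)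
    {i : ℤ} (hi1 : 1 ≤ i) (hi2 : i ≤ (n : ℤ) - 1) {k t : ℕ}
    (W : Fin (t + 1) → SM.Conf (hw Q Y Θ partQ secY n) k) (hist : Fin t → Θ × Bool)
    (happ : ∀ s : Fin t,
      SM.Apply (rule2 partQ secY n src tgt wa wb (hist s)) (W s.castSucc) (W s.succ))
    {j : Fin k} (hpair : IsHistoryPair partQ i ((W 0).st j.castSucc) ((W 0).st j.succ))
    (s : Fin t) :
    (W s.succ).w j =
      (FreeGroup.mk [(Sum.inr (i, (hist s).1, false), (hist s).2)])⁻¹ * (W s.castSucc).w j *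
        FreeGroup.mk [(Sum.inr (i, (hist s).1, true), (hist s).2)] := by
  have hpairs : ∀ s, IsHistoryPair partQ i ((W s).st j.castSucc) ((W s).st j.succ) :=
    Fin.induction hpair fun s ih =>
      (isHistoryPair_and_eq_of_apply_rule2 hsrc htgt hi1 hi2 (happ s) ih).1
  exact (isHistoryPair_and_eq_of_apply_rule2 hsrc htgt hi1 hi2 (happ s) (hpairs _)).2

theorem lift_histProj_eq_one {side : Bool} {x : FreeGroup (A2 Y Θ)}
    (hx : ∀ l ∈ x.toWord, ∀ z : ℤ × Θ × Bool, l.1 = Sum.inr z → z.2.2 ≠ side) :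
    FreeGroup.lift (histProj side) x = 1 := by
  refine FreeGroup.lift_eq_one_of_forall_mem_toWord fun l hl => ?_
  rcases hl1 : l.1 with _ | z
  · rfl
  · simp [histProj, hx l hl z hl1]

/-- Projecting onto the history letters of the side that is absent from `w 0` records the
reduced history letter by letter, so it has length `t`. -/
theorem le_norm_of_history_sector {t : ℕ} (hist : Fin t → Θ × Bool)
    (hred : ∀ (s : ℕ) (hs : s + 1 < t),
      hist ⟨s + 1, hs⟩ ≠ ((hist ⟨s, Nat.lt_of_succ_lt hs⟩).1, !(hist ⟨s, Nat.lt_of_succ_lt hs⟩).2))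
    (i : ℤ) (w : Fin (t + 1) → FreeGroup (A2 Y Θ))
    (hw : ∀ s : Fin t, w s.succ =
      (FreeGroup.mk [(Sum.inr (i, (hist s).1, false), (hist s).2)])⁻¹ * w s.castSucc *
        FreeGroup.mk [(Sum.inr (i, (hist s).1, true), (hist s).2)])
    (h0 : (∀ l ∈ (w 0).toWord, ∀ z : ℤ × Θ × Bool, l.1 = Sum.inr z → z.2.2 ≠ false) ∨
      (∀ l ∈ (w 0).toWord, ∀ z : ℤ × Θ × Bool, l.1 = Sum.inr z → z.2.2 ≠ true)) :
    t ≤ (w (Fin.last t)).norm := by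
  rcases h0 with h0 | h0
  · have hproj := FreeGroup.norm_eq_of_mul_inv_letters hist hred
      (fun s => FreeGroup.lift (histProj false) (w s)) (lift_histProj_eq_one h0)
      fun s => by simp only [hw s, map_mul, map_inv, lift_histProj_mk_singleton]; simp
    exact hproj.symm.le.trans (FreeGroup.norm_lift_le (norm_histProj_le false) _)
  · have hproj := FreeGroup.norm_eq_of_mul_inv_letters hist hred
      (fun s => (FreeGroup.lift (histProj true) (w s))⁻¹) (by simp [lift_histProj_eq_one h0])
      fun s => by simp only [hw s, map_mul, map_inv, lift_histProj_mk_singleton]; simp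
    rw [FreeGroup.norm_inv_eq] at hproj
    exact hproj.symm.le.trans (FreeGroup.norm_lift_le (norm_histProj_le true) _)

end M2

open SM M2 in
/-- Lemma `WV`: for every `N₀` there is a constant `c = c(N₀)` such that for every
reduced computation `W₀ → … → W_t` of the `S`-machine `M₂` whose first word `W₀` has no
letters from the alphabets `X_{i,ℓ}` (resp. from the alphabets `X_{i,r}`), whose base has
length at most `N₀`, and whose base contains a history subword `Q_{i,ℓ} Q_{i,r}`, one has
`|W₀|_Y ≤ c |W_t|_Y`.  The machine `M₁` is given by its standard base `Q_0 … Q_n`, state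
letters `Q`, tape letters `Y` and positive rules `Θ`, and satisfies property (**). -/
theorem m2_bounded_base_first_word_bound (N0 : ℕ) :
    ∃ c : ℕ,
      ∀ (Q Y Θ : Type) [DecidableEq Y] [DecidableEq Θ]
        (n : ℕ) (partQ : Q → ℤ) (secY : Y → ℤ)
        (src tgt : Θ → ℤ → Q) (wa wb : Θ → ℤ → FreeGroup Y),
      -- `M₁` is an `S`-machine with the standard base `Q_0 … Q_n`:
      1 ≤ n →
      (∀ q, 0 ≤ partQ q ∧ partQ q ≤ (n : ℤ)) →
      (∀ y, 0 ≤ secY y ∧ secY y ≤ (n : ℤ) - 1) →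
      (∀ θ p, 0 ≤ p → p ≤ (n : ℤ) → partQ (src θ p) = p) →
      (∀ θ p, 0 ≤ p → p ≤ (n : ℤ) → partQ (tgt θ p) = p) →
      (∀ θ p, ∀ l ∈ (wa θ p).toWord, secY l.1 = p - 1) →
      (∀ θ p, ∀ l ∈ (wb θ p).toWord, secY l.1 = p) →
      -- property (**) of `M₁`:
      (∀ θ : Θ, ∃ p0 : ℤ, (∀ p, p ≠ p0 → wa θ p = 1 ∧ wb θ p = 1) ∧
        (wa θ p0).toWord.length + (wb θ p0).toWord.length ≤ 1) →
      -- a reduced computation of `M₂` consisting of admissible words: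
      ∀ (k t : ℕ) (W : Fin (t + 1) → SM.Conf (hw Q Y Θ partQ secY n) k)
        (hist : Fin t → Θ × Bool),
      (∀ i : Fin t,
        SM.Apply (rule2 partQ secY n src tgt wa wb (hist i))
          (W i.castSucc) (W i.succ)) →
      (∀ i, SM.Admissible (hw Q Y Θ partQ secY n) (W i)) →
      (∀ (i : ℕ) (hi : i + 1 < t),
        hist ⟨i + 1, hi⟩ ≠ ((hist ⟨i, by omega⟩).1, !(hist ⟨i, by omega⟩).2)) →
      -- the base has length at most `N₀`:
      k + 1 ≤ N0 →
      -- the base contains a history subword `Q_{i₀,ℓ} Q_{i₀,r}`: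
      (∃ (j : Fin k) (i0 : ℤ), 1 ≤ i0 ∧ i0 ≤ (n : ℤ) - 1 ∧
        ((W 0).st j.castSucc).2 = true ∧ ((W 0).st j.succ).2 = true ∧
        ((W 0).st j.castSucc).1.2 = false ∧ ((W 0).st j.succ).1.2 = true ∧
        partQ ((W 0).st j.castSucc).1.1 = i0 ∧
        partQ ((W 0).st j.succ).1.1 = i0) →
      -- `W₀` has no letters from the left alphabets `X_{i,ℓ}`
      -- (resp. no letters from the right alphabets `X_{i,r}`):
      ((∀ (j : Fin k), ∀ l ∈ ((W 0).w j).toWord, ∀ z : ℤ × Θ × Bool,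
          l.1 = Sum.inr z → z.2.2 ≠ false) ∨
        (∀ (j : Fin k), ∀ l ∈ ((W 0).w j).toWord, ∀ z : ℤ × Θ × Bool,
          l.1 = Sum.inr z → z.2.2 ≠ true)) →
      SM.lenY (W 0) ≤ c * SM.lenY (W (Fin.last t)) := by
  refine ⟨2 * N0 + 1, ?_⟩
  intro Q Y Θ _ _ n partQ secY src tgt wa wb _ _ _ hsrc htgt _ _ hstar k t W hist happ _ hred hk
    hbase hX
  obtain ⟨j, i, hi1, hi2, hsign_l, hsign_r, hside_l, hside_r, hpart_l, hpart_r⟩ := hbase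
  have hwords : ∀ θ p, (wa θ p).norm ≤ 1 ∧ (wb θ p).norm ≤ 1 :=
    fun θ => norm_le_one_of_length_add_length_le_one (hstar θ)
  have hgrowth : lenY (W 0) ≤ lenY (W (Fin.last t)) + 2 * k * t :=
    lenY_le_lenY_add_of_computation W _ happ
      (fun s => norm_rule2_a_le (fun θ p => (hwords θ p).1) _)
      (fun s => norm_rule2_b_le (fun θ p => (hwords θ p).2) _)
  have hpair : IsHistoryPair partQ i ((W 0).st j.castSucc) ((W 0).st j.succ) :=
    ⟨_, _, hpart_l, hpart_r, Prod.ext (Prod.ext rfl hside_l) hsign_l,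
      Prod.ext (Prod.ext rfl hside_r) hsign_r⟩
  have hhistory : t ≤ lenY (W (Fin.last t)) :=
    (le_norm_of_history_sector hist hred i (fun s => (W s).w j)
      (history_sector_eq_of_computation hsrc htgt hi1 hi2 W hist happ hpair)
      (hX.imp (· j) (· j))).trans (norm_le_lenY (W (Fin.last t)) j)
  calc lenY (W 0) ≤ lenY (W (Fin.last t)) + 2 * k * t := hgrowth
    _ ≤ lenY (W (Fin.last t)) + 2 * N0 * lenY (W (Fin.last t)) := by gcongr; omega
    _ = (2 * N0 + 1) * lenY (W (Fin.last t)) := by ring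
end

section
/- Let J ≥ 1 and let v_1, v_2, v_3 be three black beads of a necklace O such that the clockwise arc from v_1 to v_3 contains v_2 and has at most J black beads (excluding v_1 and v_3), and suppose the arcs v_1–v_2 and v_2–v_3 contain m_1 and m_2 white beads, respectively. If O' is obtained from O by removing v_2, then μ_J(O') ≤ μ_J(O) − m_1 m_2. -/
namespace Necklace

/-- A necklace is modelled as a list of bead colours, listed in clockwise order:
`true` is a white bead, `false` a black bead.  Beads are identified with their
indices in the list. -/
def dist (L : List Bool) (i j : ℕ) : ℕ := (j + L.length - i) % L.length

/-- The number of black beads strictly inside the clockwise arc from bead `i` to bead `j`. -/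
def arcBlack (L : List Bool) (i j : ℕ) : ℕ :=
  (List.range (dist L i j)).countP
    (fun k => decide (k ≠ 0 ∧ L.getD ((i + k) % L.length) true = false))

/-- The number of white beads strictly inside the clockwise arc from bead `i` to bead `j`. -/
def arcWhite (L : List Bool) (i j : ℕ) : ℕ :=
  (List.range (dist L i j)).countP
    (fun k => decide (k ≠ 0 ∧ L.getD ((i + k) % L.length) true = true))

/-- The number of white beads of the necklace. -/
def whiteCount (L : List Bool) : ℕ := L.countP (fun x => x)

/-- The set `P_j` of ordered pairs `(o₁, o₂)` of distinct white beads such that the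
clockwise arc from `o₁` to `o₂` contains at least `j` black beads. -/
def Pset (L : List Bool) (j : ℕ) : Finset (ℕ × ℕ) :=
  (Finset.range L.length ×ˢ Finset.range L.length).filter
    (fun p => p.1 ≠ p.2 ∧ L.getD p.1 true = true ∧ L.getD p.2 true = true ∧
      j ≤ arcBlack L p.1 p.2)

/-- The `J`-mixture `μ_J(O) = Σ_{j=1}^J card(P_j)`. -/
def mu (J : ℕ) (L : List Bool) : ℕ := ∑ j ∈ Finset.Icc 1 J, (Pset L j).card

end Necklace

/-!
Rotating the necklace changes neither `μ_J` nor any arc count, so we may assume that the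
removed bead `v₂` is the last one, and removing it is `List.dropLast`. Write `μ_J` as the sum,
over all ordered pairs of distinct white beads (`Pset L 0`), of `min (arcBlack) J`. Removing a
black bead never increases a summand. For a white bead `a` between `v₁` and `v₂` and a white
bead `b` between `v₂` and `v₃`, the arc from `a` to `b` passes through `v₂` and lies inside the
arc from `v₁` to `v₃`, so it has at most `J` black beads and its summand drops by exactly one;
there are `m₁ m₂` such pairs.
-/

namespace Necklace

open Finset

def arcCount (c : Bool) (L : List Bool) (i j : ℕ) : ℕ :=
  (List.range (dist L i j)).countP
    (fun k => decide (k ≠ 0 ∧ L.getD ((i + k) % L.length) true = c))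

def beadsIco (c : Bool) (L : List Bool) (a b : ℕ) : Finset ℕ :=
  {m ∈ Ico a b | L.getD m true = c}

theorem arcBlack_eq_arcCount (L : List Bool) (i j : ℕ) :
    arcBlack L i j = arcCount false L i j := rfl

theorem arcWhite_eq_arcCount (L : List Bool) (i j : ℕ) :
    arcWhite L i j = arcCount true L i j := rfl

theorem dist_of_le {L : List Bool} {i j : ℕ} (hij : i ≤ j) (hj : j < L.length) :
    dist L i j = j - i := by
  rw [dist, show j + L.length - i = j - i + L.length by omega, Nat.add_mod_right,
    Nat.mod_eq_of_lt (by omega)]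

theorem dist_of_lt {L : List Bool} {i j : ℕ} (hji : j < i) (hi : i < L.length) :
    dist L i j = j + L.length - i :=
  Nat.mod_eq_of_lt (by omega)

theorem lt_of_dist_last_lt_dist {L : List Bool} {i j : ℕ} (hi : i < L.length) (hj : j < L.length)
    (h : dist L i (L.length - 1) < dist L i j) : j < i := by
  by_contra! hij
  rw [dist_of_le (by omega) (by omega), dist_of_le hij hj] at h
  omega

theorem card_filter_Ico_add_left (p : ℕ → Prop) [DecidablePred p] (a b s : ℕ) :
    #{k ∈ Ico (s + a) (s + b) | p k} = #{k ∈ Ico a b | p (s + k)} := by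
  rw [← map_add_left_Ico, filter_map, card_map]
  rfl

theorem arcCount_eq_card (c : Bool) (L : List Bool) (i j : ℕ) :
    arcCount c L i j = #{k ∈ Ico 1 (dist L i j) | L.getD ((i + k) % L.length) true = c} := by
  rw [arcCount, ← Nat.count, Nat.count_eq_card_filter_range, range_eq_Ico]
  congr 1
  ext k
  simp only [mem_filter, mem_Ico]
  grind

theorem arcCount_of_lt (c : Bool) {L : List Bool} {i j : ℕ} (hij : i < j) (hj : j < L.length) :
    arcCount c L i j = #(beadsIco c L (i + 1) j) := by
  have hshift := card_filter_Ico_add_left (L.getD · true = c) 1 (j - i) i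
  rw [Nat.add_sub_cancel' hij.le] at hshift
  rw [beadsIco, hshift, arcCount_eq_card, dist_of_le hij.le hj]
  refine congrArg card (filter_congr fun k hk => ?_)
  rw [Nat.mod_eq_of_lt (by rw [mem_Ico] at hk; omega)]

theorem arcCount_of_gt (c : Bool) {L : List Bool} {i j : ℕ} (hji : j < i) (hi : i < L.length) :
    arcCount c L i j = #(beadsIco c L (i + 1) L.length) + #(beadsIco c L 0 j) := by
  set n := L.length
  have hbefore := card_filter_Ico_add_left (L.getD · true = c) 1 (n - i) i
  rw [Nat.add_sub_cancel' hi.le] at hbefore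
  have hafter := card_filter_Ico_add_left (fun k => L.getD ((i + k) % n) true = c) 0 j (n - i)
  rw [add_zero] at hafter
  rw [arcCount_eq_card, dist_of_lt hji hi,
    ← Ico_union_Ico_eq_Ico (b := n - i) (by omega) (by omega), filter_union,
    card_union_of_disjoint (disjoint_filter_filter (Ico_disjoint_Ico_consecutive _ _ _)),
    beadsIco, beadsIco, hbefore, show j + n - i = n - i + j by omega, hafter]
  congr 2
  · refine filter_congr fun k hk => ?_
    rw [Nat.mod_eq_of_lt (by rw [mem_Ico] at hk; omega)]
  · refine filter_congr fun k hk => ?_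
    rw [show i + (n - i + k) = k + n by omega, Nat.add_mod_right,
      Nat.mod_eq_of_lt (by rw [mem_Ico] at hk; omega)]

theorem getD_dropLast (L : List Bool) {m : ℕ} (hm : m < L.length - 1) :
    L.dropLast.getD m true = L.getD m true := by
  rw [List.getD_eq_getElem _ _ (by rwa [List.length_dropLast]),
    List.getD_eq_getElem _ _ (by omega), List.getElem_dropLast]

theorem beadsIco_dropLast (c : Bool) (L : List Bool) {a b : ℕ} (hb : b < L.length) :
    beadsIco c L.dropLast a b = beadsIco c L a b :=
  filter_congr fun m hm => by rw [getD_dropLast L (by rw [mem_Ico] at hm; omega)]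

theorem arcCount_dropLast_of_lt (c : Bool) {L : List Bool} {i j : ℕ} (hij : i < j)
    (hj : j < L.length - 1) : arcCount c L.dropLast i j = arcCount c L i j := by
  rw [arcCount_of_lt c hij (by rwa [List.length_dropLast]), arcCount_of_lt c hij (by omega),
    beadsIco_dropLast c L (by omega)]

theorem card_beadsIco_add {c : Bool} {L : List Bool} {a m b : ℕ} (ham : a ≤ m) (hmb : m ≤ b) :
    #(beadsIco c L a m) + #(beadsIco c L m b) = #(beadsIco c L a b) := by
  rw [beadsIco, beadsIco, beadsIco, ← card_union_of_disjoint
    (disjoint_filter_filter (Ico_disjoint_Ico_consecutive a m b)), ← filter_union,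
    Ico_union_Ico_eq_Ico ham hmb]

theorem card_beadsIco_succ {c : Bool} {L : List Bool} {m : ℕ} (hm : L.getD m true = c) :
    #(beadsIco c L m (m + 1)) = 1 := by
  rw [beadsIco, Nat.Ico_succ_singleton, filter_singleton, if_pos hm, card_singleton]

theorem arcCount_dropLast_add_one_of_gt (c : Bool) {L : List Bool} {i j : ℕ} (hji : j < i)
    (hi : i < L.length - 1) (hlast : L.getD (L.length - 1) true = c) :
    arcCount c L.dropLast i j + 1 = arcCount c L i j := by
  have hsplit := card_beadsIco_add (c := c) (L := L) (by omega : i + 1 ≤ L.length - 1)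
    (by omega : L.length - 1 ≤ L.length - 1 + 1)
  rw [card_beadsIco_succ hlast, Nat.sub_add_cancel (by omega : 1 ≤ L.length)] at hsplit
  rw [arcCount_of_gt c hji (by rwa [List.length_dropLast]), arcCount_of_gt c hji (by omega),
    List.length_dropLast, beadsIco_dropLast c L (by omega), beadsIco_dropLast c L (by omega),
    ← hsplit]
  ring

theorem arcCount_last_of_lt (c : Bool) {L : List Bool} {j : ℕ} (hj : j < L.length - 1) :
    arcCount c L (L.length - 1) j = #(beadsIco c L 0 j) := by
  rw [arcCount_of_gt c hj (by omega), Nat.sub_add_cancel (by omega), beadsIco, Ico_self,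
    filter_empty, card_empty, zero_add]

theorem arcCount_le_of_gt (c : Bool) {L : List Bool} {i j i' j' : ℕ} (hi : i ≤ i') (hj : j' ≤ j)
    (hji : j < i) (hji' : j' < i') (hi' : i' < L.length) :
    arcCount c L i' j' ≤ arcCount c L i j := by
  rw [arcCount_of_gt c hji (by omega), arcCount_of_gt c hji' hi']
  exact add_le_add (card_le_card (filter_subset_filter _ (Ico_subset_Ico (by omega) le_rfl)))
    (card_le_card (filter_subset_filter _ (Ico_subset_Ico le_rfl hj)))

theorem getD_rotate (L : List Bool) (r : ℕ) {m : ℕ} (hm : m < L.length) :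
    (L.rotate r).getD m true = L.getD ((m + r) % L.length) true := by
  rw [List.getD_eq_getElem _ _ (by rwa [List.length_rotate]),
    List.getD_eq_getElem _ _ (Nat.mod_lt _ (by omega)), List.getElem_rotate]

theorem eq_of_add_mod_eq {n x y : ℕ} (r : ℕ) (hx : x < n) (hy : y < n)
    (h : (x + r) % n = (y + r) % n) : x = y := by
  have := Nat.ModEq.add_right_cancel' r h
  rwa [Nat.ModEq, Nat.mod_eq_of_lt hx, Nat.mod_eq_of_lt hy] at this

theorem dist_add_mod (L : List Bool) (r : ℕ) {i j : ℕ} (hi : i < L.length) (hj : j < L.length) :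
    dist L ((i + r) % L.length) ((j + r) % L.length) = dist L i j := by
  set n := L.length
  have hi' : (i + r) % n < n := Nat.mod_lt _ (by omega)
  refine Nat.ModEq.add_right_cancel' ((i + r) % n + i) ?_
  rw [show (j + r) % n + n - (i + r) % n + ((i + r) % n + i) = (j + r) % n + n + i by omega,
    show j + n - i + ((i + r) % n + i) = j + n + (i + r) % n by omega]
  calc (j + r) % n + n + i ≡ j + r + n + i [MOD n] := by gcongr; exact Nat.mod_modEq _ _
    _ = j + n + (i + r) := by ring
    _ ≡ j + n + (i + r) % n [MOD n] := by gcongr; exact (Nat.mod_modEq _ _).symm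

theorem dist_rotate (L : List Bool) (r i j : ℕ) : dist (L.rotate r) i j = dist L i j := by
  rw [dist, dist, List.length_rotate]

theorem arcCount_rotate (c : Bool) (L : List Bool) (r : ℕ) {i j : ℕ} (hi : i < L.length)
    (hj : j < L.length) :
    arcCount c (L.rotate r) i j = arcCount c L ((i + r) % L.length) ((j + r) % L.length) := by
  rw [arcCount, arcCount, dist_rotate, dist_add_mod L r hi hj, List.length_rotate]
  refine List.countP_congr fun k _ => ?_
  rw [getD_rotate L r (Nat.mod_lt _ (by omega)), Nat.mod_add_mod, Nat.mod_add_mod,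
    add_right_comm]

theorem mem_Pset {L : List Bool} {j : ℕ} {p : ℕ × ℕ} :
    p ∈ Pset L j ↔ (p.1 < L.length ∧ p.2 < L.length) ∧ p.1 ≠ p.2 ∧
      L.getD p.1 true = true ∧ L.getD p.2 true = true ∧ j ≤ arcBlack L p.1 p.2 := by
  rw [Pset, mem_filter, mem_product, mem_range, mem_range]

theorem card_Pset_rotate_le (L : List Bool) (r j : ℕ) :
    #(Pset (L.rotate r) j) ≤ #(Pset L j) := by
  set n := L.length
  refine card_le_card_of_injOn (fun p => ((p.1 + r) % n, (p.2 + r) % n)) (fun p hp => ?_)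
    (fun p hp q hq h => ?_)
  · rw [mem_coe, mem_Pset, List.length_rotate] at hp
    obtain ⟨⟨h1, h2⟩, hne, hw1, hw2, harc⟩ := hp
    rw [getD_rotate L r h1] at hw1
    rw [getD_rotate L r h2] at hw2
    rw [arcBlack_eq_arcCount, arcCount_rotate false L r h1 h2] at harc
    exact mem_Pset.2 ⟨⟨Nat.mod_lt _ (by omega), Nat.mod_lt _ (by omega)⟩,
      fun h => hne (eq_of_add_mod_eq r h1 h2 h), hw1, hw2, harc⟩
  · rw [mem_coe, mem_Pset, List.length_rotate] at hp hq
    simp only [Prod.mk.injEq] at h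
    exact Prod.ext (eq_of_add_mod_eq r hp.1.1 hq.1.1 h.1) (eq_of_add_mod_eq r hp.1.2 hq.1.2 h.2)

theorem mu_rotate (J : ℕ) (L : List Bool) (r : ℕ) : mu J (L.rotate r) = mu J L := by
  refine sum_congr rfl fun j _ => (card_Pset_rotate_le L r j).antisymm ?_
  conv_lhs => rw [List.rotate_eq_iff.1 (rfl : L.rotate r = L.rotate r)]
  exact card_Pset_rotate_le _ _ j

theorem dropLast_rotate_succ (L : List Bool) {v : ℕ} (hv : v < L.length) :
    (L.rotate (v + 1)).dropLast = (L.eraseIdx v).rotate v := by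
  have hrotate := List.rotate_append_length_eq (L.take v) (L.drop (v + 1))
  rw [List.length_take_of_le hv.le] at hrotate
  rw [List.rotate_eq_drop_append_take hv, List.take_succ_eq_append_getElem hv,
    ← List.append_assoc, List.dropLast_concat, List.eraseIdx_eq_take_drop_succ, hrotate]

theorem Pset_eq_filter (L : List Bool) (j : ℕ) :
    Pset L j = {p ∈ Pset L 0 | j ≤ arcBlack L p.1 p.2} := by
  ext p
  simp only [mem_filter, mem_Pset, zero_le, and_true, and_assoc]

theorem mu_eq_sum_min (J : ℕ) (L : List Bool) :
    mu J L = ∑ p ∈ Pset L 0, min (arcBlack L p.1 p.2) J := by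
  have hcard (j : ℕ) : #(Pset L j) = ∑ p ∈ Pset L 0, if j ≤ arcBlack L p.1 p.2 then 1 else 0 := by
    rw [Pset_eq_filter L j, card_filter]
  rw [mu, sum_congr rfl fun j _ => hcard j, sum_comm]
  refine sum_congr rfl fun p _ => ?_
  rw [← card_filter, show {j ∈ Icc 1 J | j ≤ arcBlack L p.1 p.2} =
      Icc 1 (min (arcBlack L p.1 p.2) J) by ext; simp only [mem_filter, mem_Icc]; omega,
    Nat.card_Icc, Nat.add_sub_cancel]

theorem Pset_dropLast_subset (L : List Bool) : Pset L.dropLast 0 ⊆ Pset L 0 := by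
  intro p hp
  rw [mem_Pset, List.length_dropLast] at hp
  obtain ⟨⟨h1, h2⟩, hne, hw1, hw2, -⟩ := hp
  rw [getD_dropLast L h1] at hw1
  rw [getD_dropLast L h2] at hw2
  exact mem_Pset.2 ⟨⟨by omega, by omega⟩, hne, hw1, hw2, Nat.zero_le _⟩

theorem arcBlack_dropLast_le {L : List Bool} {i j : ℕ} (hne : i ≠ j) (hi : i < L.length - 1)
    (hj : j < L.length - 1) (hlast : L.getD (L.length - 1) true = false) :
    arcBlack L.dropLast i j ≤ arcBlack L i j := by
  rcases lt_or_gt_of_ne hne with hij | hji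
  · exact (arcCount_dropLast_of_lt false hij hj).le
  · exact (Nat.le_succ _).trans (arcCount_dropLast_add_one_of_gt false hji hi hlast).le

theorem min_arcBlack_dropLast_add_one_le {L : List Bool} {J i j : ℕ} (hji : j < i)
    (hi : i < L.length - 1) (hlast : L.getD (L.length - 1) true = false)
    (hJ : arcBlack L i j ≤ J) :
    min (arcBlack L.dropLast i j) J + 1 ≤ min (arcBlack L i j) J := by
  have hdrop := arcCount_dropLast_add_one_of_gt false hji hi hlast
  rw [arcBlack_eq_arcCount, arcBlack_eq_arcCount] at *
  omega

theorem mu_dropLast_add_mul_le (L : List Bool) (J : ℕ) {v1 v3 : ℕ} (hv31 : v3 < v1)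
    (hv1 : v1 < L.length - 1) (hlast : L.getD (L.length - 1) true = false)
    (harc : arcBlack L v1 v3 ≤ J) :
    mu J L.dropLast + arcWhite L v1 (L.length - 1) * arcWhite L (L.length - 1) v3 ≤ mu J L := by
  set S := beadsIco true L (v1 + 1) (L.length - 1) ×ˢ beadsIco true L 0 v3
  have hcardS : #S = arcWhite L v1 (L.length - 1) * arcWhite L (L.length - 1) v3 := by
    rw [card_product, arcWhite_eq_arcCount, arcWhite_eq_arcCount,
      arcCount_of_lt true hv1 (by omega), arcCount_last_of_lt true (by omega)]
  have hSsub : S ⊆ Pset L.dropLast 0 := by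
    intro p hp
    simp only [S, beadsIco, mem_product, mem_filter, mem_Ico] at hp
    obtain ⟨⟨⟨h1, h1'⟩, hw1⟩, ⟨-, h2⟩, hw2⟩ := hp
    exact mem_Pset.2 ⟨⟨by rw [List.length_dropLast]; omega, by rw [List.length_dropLast]; omega⟩,
      by omega, by rwa [getD_dropLast L h1'], by rwa [getD_dropLast L (by omega)], Nat.zero_le _⟩
  have hpair : ∀ p ∈ Pset L.dropLast 0,
      min (arcBlack L.dropLast p.1 p.2) J + (if p ∈ S then 1 else 0) ≤
        min (arcBlack L p.1 p.2) J := by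
    intro p hp
    rw [mem_Pset, List.length_dropLast] at hp
    obtain ⟨⟨h1, h2⟩, hne, -⟩ := hp
    split_ifs with hS
    · simp only [S, beadsIco, mem_product, mem_filter, mem_Ico] at hS
      obtain ⟨⟨⟨hv1p, -⟩, -⟩, ⟨-, hpv3⟩, -⟩ := hS
      refine min_arcBlack_dropLast_add_one_le (by omega) h1 hlast (harc.trans' ?_)
      exact arcCount_le_of_gt false (by omega) hpv3.le hv31 (by omega) (by omega)
    · rw [add_zero]
      exact min_le_min_right J (arcBlack_dropLast_le hne h1 h2 hlast)
  calc mu J L.dropLast + arcWhite L v1 (L.length - 1) * arcWhite L (L.length - 1) v3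
      = ∑ p ∈ Pset L.dropLast 0,
          (min (arcBlack L.dropLast p.1 p.2) J + if p ∈ S then 1 else 0) := by
        rw [mu_eq_sum_min, ← hcardS, sum_add_distrib, sum_ite_mem, inter_eq_right.2 hSsub,
          card_eq_sum_ones]
    _ ≤ ∑ p ∈ Pset L.dropLast 0, min (arcBlack L p.1 p.2) J := sum_le_sum hpair
    _ ≤ ∑ p ∈ Pset L 0, min (arcBlack L p.1 p.2) J :=
        sum_le_sum_of_subset (Pset_dropLast_subset L)
    _ = mu J L := (mu_eq_sum_min J L).symm

end Necklace

theorem necklace_mixture_remove_black_bead_general (L : List Bool) (J : ℕ)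
    (v1 v2 v3 : ℕ) (hv1 : v1 < L.length) (hv2 : v2 < L.length) (hv3 : v3 < L.length)
    (hb2 : L.getD v2 true = false)
    (h12 : v1 ≠ v2)
    (hbetween : Necklace.dist L v1 v2 < Necklace.dist L v1 v3)
    (harc : Necklace.arcBlack L v1 v3 ≤ J) :
    Necklace.mu J (L.eraseIdx v2) + Necklace.arcWhite L v1 v2 * Necklace.arcWhite L v2 v3 ≤
      Necklace.mu J L := by
  obtain ⟨M, hM⟩ : ∃ M, M = L.rotate (v2 + 1) := ⟨_, rfl⟩
  have herase : Necklace.mu J (L.eraseIdx v2) = Necklace.mu J M.dropLast := by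
    rw [hM, Necklace.dropLast_rotate_succ L hv2, Necklace.mu_rotate]
  have hL : M.rotate (L.length - (v2 + 1)) = L := by
    rw [hM, List.rotate_rotate, Nat.add_sub_cancel' hv2, List.rotate_length]
  have hlast : (v2 + (L.length - (v2 + 1))) % L.length = L.length - 1 := by
    rw [Nat.mod_eq_of_lt (by omega)]
    omega
  clear hM
  generalize L.length - (v2 + 1) = s at hL hlast
  subst hL
  rw [List.length_rotate] at hv1 hv2 hv3 hlast
  rw [Necklace.getD_rotate M s hv2, hlast] at hb2
  rw [Necklace.dist_rotate, Necklace.dist_rotate, ← Necklace.dist_add_mod M s hv1 hv2,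
    ← Necklace.dist_add_mod M s hv1 hv3, hlast] at hbetween
  rw [Necklace.arcBlack_eq_arcCount, Necklace.arcCount_rotate false M s hv1 hv3] at harc
  have hw1 : (v1 + s) % M.length < M.length - 1 :=
    (Nat.le_sub_one_of_lt (Nat.mod_lt _ (by omega))).lt_of_ne
      fun h => h12 (Necklace.eq_of_add_mod_eq s hv1 hv2 (h.trans hlast.symm))
  have hw31 := Necklace.lt_of_dist_last_lt_dist (Nat.mod_lt _ (by omega)) (Nat.mod_lt _ (by omega))
    hbetween
  rw [herase, Necklace.arcWhite_eq_arcCount, Necklace.arcWhite_eq_arcCount,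
    Necklace.arcCount_rotate true M s hv1 hv2, Necklace.arcCount_rotate true M s hv2 hv3, hlast,
    Necklace.mu_rotate]
  exact Necklace.mu_dropLast_add_mul_le M J hw31 hw1 hb2 harc

/-- If `v₁, v₂, v₃` are black beads such that the clockwise arc from `v₁` to `v₃`
contains `v₂` and has at most `J` black beads (excluding `v₁` and `v₃`), and the arcs
`v₁–v₂` and `v₂–v₃` contain `m₁` and `m₂` white beads respectively, then removing `v₂`
decreases the `J`-mixture at least by `m₁ m₂`. -/
theorem necklace_mixture_remove_black_bead (L : List Bool) (J : ℕ) (hJ : 1 ≤ J)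
    (v1 v2 v3 : ℕ) (hv1 : v1 < L.length) (hv2 : v2 < L.length) (hv3 : v3 < L.length)
    (hb1 : L.getD v1 true = false) (hb2 : L.getD v2 true = false)
    (hb3 : L.getD v3 true = false)
    (h12 : v1 ≠ v2) (h23 : v2 ≠ v3) (h13 : v1 ≠ v3)
    (hbetween : Necklace.dist L v1 v2 < Necklace.dist L v1 v3)
    (harc : Necklace.arcBlack L v1 v3 ≤ J) :
    Necklace.mu J (L.eraseIdx v2) + Necklace.arcWhite L v1 v2 * Necklace.arcWhite L v2 v3 ≤
      Necklace.mu J L :=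
  necklace_mixture_remove_black_bead_general L J v1 v2 v3 hv1 hv2 hv3 hb2 h12 hbetween harc
end
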